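/- Let G be a finite simple graph that is locally bipartite and contains a copy of H₀. Then δ(G) ≤ (4/7)·|G|. -/

import Mathlib

/-! Every vertex `x` is adjacent to at most four vertices of a copy of `H₀`: the neighbourhood
of `x` is 2-colourable, each colour class pulls back to an independent set of `H₀`, and `H₀` has
independence number 2. Double counting the edges between the copy and `G` then gives
`7 δ(G) ≤ ∑ deg(copy vertices) ≤ 4 |G|`. -/


open SimpleGraph

/-- A finite simple graph is *locally bipartite* if each neighbourhood induces a
bipartite (equivalently, 2-colourable) graph. -/
def LocallyBipartite {V : Type*} (G : SimpleGraph V) : Prop :=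
  ∀ v : V, (G.induce (G.neighborSet v)).Colorable 2

/-- `C̄₇`, the complement of the 7-cycle: `i` and `j` are adjacent iff they differ by
`±2` or `±3` modulo 7. -/
def C7bar : SimpleGraph (ZMod 7) :=
  SimpleGraph.fromRel (fun i j => j = i + 2 ∨ j = i + 3)

/-- `H₀`, the Moser spindle: the 7-cycle `v₀v₁…v₆` together with the edges
`v₀v₂`, `v₀v₅`, `v₁v₃`, `v₄v₆`. -/
def H0 : SimpleGraph (ZMod 7) :=
  SimpleGraph.fromRel (fun i j =>
    j = i + 1 ∨ (i = 0 ∧ j = 2) ∨ (i = 0 ∧ j = 5) ∨ (i = 1 ∧ j = 3) ∨ (i = 4 ∧ j = 6))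

/-- `H₁`: the 7-cycle `v₀v₁…v₆` together with the edges
`v₃v₅`, `v₅v₀`, `v₀v₂`, `v₂v₄`, `v₆v₁`. -/
def H1 : SimpleGraph (ZMod 7) :=
  SimpleGraph.fromRel (fun i j =>
    j = i + 1 ∨ (i = 3 ∧ j = 5) ∨ (i = 5 ∧ j = 0) ∨ (i = 0 ∧ j = 2) ∨
      (i = 2 ∧ j = 4) ∨ (i = 6 ∧ j = 1))

/-- `H₂`: the 7-cycle `v₀v₁…v₆` together with the edges
`v₁v₃`, `v₃v₅`, `v₅v₀`, `v₀v₂`, `v₂v₄`, `v₄v₆`. -/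
def H2 : SimpleGraph (ZMod 7) :=
  SimpleGraph.fromRel (fun i j =>
    j = i + 1 ∨ (i = 1 ∧ j = 3) ∨ (i = 3 ∧ j = 5) ∨ (i = 5 ∧ j = 0) ∨
      (i = 0 ∧ j = 2) ∨ (i = 2 ∧ j = 4) ∨ (i = 4 ∧ j = 6))

/-- `H₂⁺`: the graph `H₂` (on the `some` vertices) together with an extra vertex
(`none`) joined to exactly `v₀`, `v₂` and `v₅`. -/
def H2plus : SimpleGraph (Option (ZMod 7)) :=
  SimpleGraph.fromRel (fun a b =>
    match a, b with
    | some i, some j =>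
        j = i + 1 ∨ (i = 1 ∧ j = 3) ∨ (i = 3 ∧ j = 5) ∨ (i = 5 ∧ j = 0) ∨
          (i = 0 ∧ j = 2) ∨ (i = 2 ∧ j = 4) ∨ (i = 4 ∧ j = 6)
    | none, some j => j = 0 ∨ j = 2 ∨ j = 5
    | _, _ => False)

/-- A graph `G` contains a copy of `H` if there is an injective graph homomorphism
from `H` to `G`, i.e. `G` has a (not necessarily induced) subgraph isomorphic to `H`. -/
def ContainsCopy {W V : Type*} (H : SimpleGraph W) (G : SimpleGraph V) : Prop :=
  ∃ f : H →g G, Function.Injective f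

/-- A pair of vertices `u, v` is *dense* if the common neighbourhood of `u` and `v`
contains an edge. -/
def DensePair {V : Type*} (G : SimpleGraph V) (u v : V) : Prop :=
  ∃ x y : V, G.Adj u x ∧ G.Adj v x ∧ G.Adj u y ∧ G.Adj v y ∧ G.Adj x y

/-- A pair of distinct vertices `u, v` is *sparse* if `u` and `v` are not adjacent and
the common neighbourhood of `u` and `v` contains no edge. -/
def SparsePair {V : Type*} (G : SimpleGraph V) (u v : V) : Prop :=
  u ≠ v ∧ ¬ G.Adj u v ∧ ¬ DensePair G u v

/-- A set of vertices is independent if it contains no edge. -/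
def IsIndepSet {V : Type*} (G : SimpleGraph V) (s : Set V) : Prop :=
  ∀ ⦃u⦄, u ∈ s → ∀ ⦃v⦄, v ∈ s → ¬ G.Adj u v

namespace SimpleGraph

open Finset

variable {α W V : Type*} {G : SimpleGraph α}

theorem indepNum_induce_le [Finite α] (s : Set α) : (G.induce s).indepNum ≤ G.indepNum := by
  obtain ⟨t, ht⟩ := (G.induce s).exists_isNIndepSet_indepNum
  rw [← ht.card_eq, ← t.card_map (Function.Embedding.subtype _)]
  apply IsIndepSet.card_le_indepNum
  rw [coe_map, IsIndepSet, (Function.Embedding.subtype _).injective.injOn.pairwise_image]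
  exact ht.isIndepSet

theorem Colorable.card_le_mul_indepNum [Fintype α] {n : ℕ} (h : G.Colorable n) :
    Fintype.card α ≤ n * G.indepNum := by
  classical
  obtain ⟨c⟩ := h
  calc Fintype.card α = ∑ k : Fin n, #{a | c a = k} :=
        card_eq_sum_card_fiberwise fun a _ => mem_univ (c a)
    _ ≤ ∑ _k : Fin n, G.indepNum := sum_le_sum fun k _ => IsIndepSet.card_le_indepNum <| by
        simpa [Coloring.colorClass] using c.isIndepSet_colorClass k
    _ = n * G.indepNum := by simp

theorem card_filter_adj_hom_le [Fintype W] {H : SimpleGraph W} {G : SimpleGraph V}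
    [DecidableRel G.Adj] (f : H →g G) {x : V} {n : ℕ}
    (hx : (G.induce (G.neighborSet x)).Colorable n) :
    #{i | G.Adj x (f i)} ≤ n * H.indepNum := by
  let s : Set W := {i | G.Adj x (f i)}
  let φ : H.induce s →g G.induce (G.neighborSet x) :=
    ⟨fun i => ⟨f i, i.2⟩, fun h => f.map_adj h⟩
  calc #{i | G.Adj x (f i)} = Fintype.card s := (Fintype.card_subtype _).symm
    _ ≤ n * (H.induce s).indepNum := (hx.of_hom φ).card_le_mul_indepNum
    _ ≤ n * H.indepNum := Nat.mul_le_mul_left n (indepNum_induce_le s)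

theorem sum_degree_comp_eq [Fintype W] [Fintype V] (G : SimpleGraph V) [DecidableRel G.Adj]
    (f : W → V) : ∑ i, G.degree (f i) = ∑ x, #{i | G.Adj x (f i)} := by
  simp_rw [← card_neighborFinset_eq_degree, neighborFinset_eq_filter, adj_comm _ _ (f _)]
  exact sum_card_bipartiteAbove_eq_sum_card_bipartiteBelow _

theorem card_mul_minDegree_le_of_hom [Fintype W] [Fintype V] {H : SimpleGraph W}
    {G : SimpleGraph V} [DecidableRel G.Adj] (f : H →g G) {n : ℕ}
    (hG : ∀ x, (G.induce (G.neighborSet x)).Colorable n) :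
    Fintype.card W * G.minDegree ≤ n * H.indepNum * Fintype.card V := by
  calc Fintype.card W * G.minDegree = ∑ _i : W, G.minDegree := by simp
    _ ≤ ∑ i, G.degree (f i) := sum_le_sum fun i _ => G.minDegree_le_degree (f i)
    _ = ∑ x, #{i | G.Adj x (f i)} := G.sum_degree_comp_eq f
    _ ≤ ∑ _x : V, n * H.indepNum := sum_le_sum fun x _ => card_filter_adj_hom_le f (hG x)
    _ = n * H.indepNum * Fintype.card V := by simp [mul_comm]

end SimpleGraph

instance : DecidableRel H0.Adj := fun a b =>
  decidable_of_iff _ (fromRel_adj _ a b).symm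

theorem H0_adj_or_adj_or_adj : ∀ i j k : ZMod 7, i ≠ j → i ≠ k → j ≠ k →
    H0.Adj i j ∨ H0.Adj i k ∨ H0.Adj j k := by
  decide

theorem H0_indepNum_le_two : H0.indepNum ≤ 2 := by
  obtain ⟨s, hs⟩ := H0.exists_isNIndepSet_indepNum
  rw [← hs.card_eq]
  by_contra! h
  obtain ⟨a, ha, b, hb, c, hc, hab, hac, hbc⟩ := Finset.two_lt_card.mp h
  rcases H0_adj_or_adj_or_adj a b c hab hac hbc with h | h | h
  exacts [hs.isIndepSet ha hb hab h, hs.isIndepSet ha hc hac h, hs.isIndepSet hb hc hbc h]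

/-- A locally bipartite graph containing a copy of the Moser spindle `H₀` has minimum
degree at most `4/7·|G|`. -/
theorem locallyBipartite_contains_H0_minDegree_le {V : Type} [Fintype V]
    (G : SimpleGraph V) [DecidableRel G.Adj]
    (hLB : LocallyBipartite G)
    (hH0 : ContainsCopy H0 G) :
    (G.minDegree : ℝ) ≤ (4 / 7 : ℝ) * (Fintype.card V : ℝ) := by
  obtain ⟨f, -⟩ := hH0
  have h : 7 * G.minDegree ≤ 2 * 2 * Fintype.card V := calc
    7 * G.minDegree ≤ 2 * H0.indepNum * Fintype.card V := card_mul_minDegree_le_of_hom f hLB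
    _ ≤ 2 * 2 * Fintype.card V := by gcongr; exact H0_indepNum_le_two
  have h' : (7 : ℝ) * G.minDegree ≤ 4 * Fintype.card V := by exact_mod_cast h
  linarith
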